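/- Fix m ≥ 1. For every m-dimensional ℂ-linear subspace H of ℂ^{2m}, the set {t ∈ ℂ : H ∩ F_m(t) ≠ {0}} is finite. -/

import Mathlib

/-- The nilpotent matrix `η` with `η e_i = e_{i+1}` on standard basis vectors
(0-based indices), i.e. `η_{i+1,i} = 1` and all other entries `0`. -/
noncomputable def eta (m : ℕ) : Matrix (Fin (2 * m)) (Fin (2 * m)) ℂ :=
  Matrix.of fun i j => if (i : ℕ) = (j : ℕ) + 1 then 1 else 0

/-- The osculating subspace `F_j(t) = exp(tη)·span{e_0,…,e_{j−1}} ⊆ ℂ^{2m}` of the rational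
normal curve. -/
noncomputable def osc (m : ℕ) (j : ℕ) (t : ℂ) : Submodule ℂ (Fin (2 * m) → ℂ) :=
  Submodule.map (Matrix.toLin' (NormedSpace.exp (t • eta m)))
    (Submodule.span ℂ
      ((fun i : Fin (2 * m) => (Pi.single i 1 : Fin (2 * m) → ℂ)) '' {i | (i : ℕ) < j}))

open Polynomial Finset

namespace OscAux

/-! ### The explicit exponential matrix -/

/-- The explicit matrix of `exp (t • eta m)`. -/
noncomputable def Emat (m : ℕ) (t : ℂ) : Matrix (Fin (2 * m)) (Fin (2 * m)) ℂ :=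
  Matrix.of fun i j =>
    if (j : ℕ) ≤ (i : ℕ) then t ^ ((i : ℕ) - (j : ℕ)) * ((((i : ℕ) - (j : ℕ)).factorial : ℂ))⁻¹
    else 0

lemma eta_apply (m : ℕ) (i j : Fin (2 * m)) :
    eta m i j = if (i : ℕ) = (j : ℕ) + 1 then 1 else 0 := rfl

lemma eta_pow (m k : ℕ) :
    (eta m) ^ k
      = Matrix.of fun i j : Fin (2 * m) => if (i : ℕ) = (j : ℕ) + k then (1 : ℂ) else 0 := by
  induction k with
  | zero =>
    ext i j
    rw [pow_zero, Matrix.one_apply, Matrix.of_apply]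
    by_cases h : i = j
    · subst h; rw [if_pos rfl, if_pos (by omega)]
    · rw [if_neg h, if_neg fun hc => h (Fin.ext (by omega))]
  | succ k ih =>
    ext i j
    rw [pow_succ, Matrix.mul_apply, Matrix.of_apply]
    simp only [ih, Matrix.of_apply, eta_apply]
    by_cases hj : (j : ℕ) + 1 < 2 * m
    · rw [Finset.sum_eq_single (⟨(j : ℕ) + 1, hj⟩ : Fin (2 * m))]
      · have hval : ((⟨(j : ℕ) + 1, hj⟩ : Fin (2 * m)) : ℕ) = (j : ℕ) + 1 := rfl
        rw [hval, if_pos rfl, mul_one, show (j : ℕ) + 1 + k = (j : ℕ) + (k + 1) by omega]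
      · intro l _ hl
        rw [if_neg fun hc => hl (Fin.ext hc), mul_zero]
      · intro h; exact absurd (Finset.mem_univ _) h
    · have h2 : ¬ ((i : ℕ) = (j : ℕ) + (k + 1)) := by have := i.isLt; omega
      rw [Finset.sum_eq_zero fun l _ => ?_, if_neg h2]
      have hl2 : ¬ ((l : ℕ) = (j : ℕ) + 1) := by have := l.isLt; omega
      rw [if_neg hl2, mul_zero]

lemma eta_pow_eq_zero (m n : ℕ) (hn : 2 * m ≤ n) : (eta m) ^ n = 0 := by
  rw [eta_pow]
  ext i j
  have : ¬ ((i : ℕ) = (j : ℕ) + n) := by have := i.isLt; omega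
  simp [this]

lemma exp_eta (m : ℕ) (t : ℂ) : NormedSpace.exp (t • _root_.eta m) = Emat m t := by
  have hz : ∀ n ∉ Finset.range (2 * m), ((n.factorial : ℂ))⁻¹ • (t • _root_.eta m) ^ n = 0 := by
    intro n hn
    rw [_root_.smul_pow, eta_pow_eq_zero m n (by simpa using hn)]
    simp
  rw [show NormedSpace.exp (t • _root_.eta m)
      = ∑ n ∈ Finset.range (2 * m), ((n.factorial : ℂ))⁻¹ • (t • _root_.eta m) ^ n by
    rw [NormedSpace.exp_eq_tsum ℂ]; exact tsum_eq_sum hz]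
  ext i j
  rw [Matrix.sum_apply]
  simp only [_root_.smul_pow, eta_pow, Matrix.smul_apply, Matrix.of_apply, smul_eq_mul, Emat]
  by_cases hij : (j : ℕ) ≤ (i : ℕ)
  · rw [if_pos hij, Finset.sum_eq_single_of_mem ((i : ℕ) - (j : ℕ))
      (Finset.mem_range.mpr (by have := i.isLt; omega))]
    · rw [if_pos (by omega : (i : ℕ) = (j : ℕ) + ((i : ℕ) - (j : ℕ)))]
      ring
    · intro n _ hn
      have : ¬ ((i : ℕ) = (j : ℕ) + n) := by omega
      simp [this]
  · rw [if_neg hij, Finset.sum_eq_zero]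
    intro n _
    have : ¬ ((i : ℕ) = (j : ℕ) + n) := by omega
    simp [this]

lemma Emat_mul (m : ℕ) (s t : ℂ) : Emat m s * Emat m t = Emat m (s + t) := by
  ext i j
  rw [Matrix.mul_apply]
  simp only [Emat, Matrix.of_apply]
  by_cases hij : (j : ℕ) ≤ (i : ℕ)
  · rw [if_pos hij]
    set n : ℕ := (i : ℕ) - (j : ℕ) with hn
    set G : ℕ → ℂ := fun k =>
      (if k ≤ (i : ℕ) then s ^ ((i : ℕ) - k) * ((((i : ℕ) - k).factorial : ℂ))⁻¹ else 0) *
      (if (j : ℕ) ≤ k then t ^ (k - (j : ℕ)) * (((k - (j : ℕ)).factorial : ℂ))⁻¹ else 0) with hG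
    have h1 : (∑ k : Fin (2 * m),
        (if (k : ℕ) ≤ (i : ℕ) then s ^ ((i : ℕ) - (k : ℕ)) *
            ((((i : ℕ) - (k : ℕ)).factorial : ℂ))⁻¹ else 0) *
        (if (j : ℕ) ≤ (k : ℕ) then t ^ ((k : ℕ) - (j : ℕ)) *
            ((((k : ℕ) - (j : ℕ)).factorial : ℂ))⁻¹ else 0)) = ∑ k ∈ Finset.range (2 * m), G k :=
      Fin.sum_univ_eq_sum_range G (2 * m)
    rw [h1]
    have h2 : ∑ k ∈ Finset.range (2 * m), G k = ∑ k ∈ Finset.Ico (j : ℕ) ((i : ℕ) + 1), G k := by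
      refine (Finset.sum_subset ?_ ?_).symm
      · intro x hx
        rw [Finset.mem_Ico] at hx
        rw [Finset.mem_range]
        have := i.isLt; omega
      · intro x _ hx
        rw [Finset.mem_Ico, not_and_or] at hx
        rcases hx with hx | hx
        · rw [hG]; simp only []
          rw [if_neg hx, mul_zero]
        · rw [hG]; simp only []
          rw [if_neg (by omega : ¬ x ≤ (i : ℕ)), zero_mul]
    rw [h2, Finset.sum_Ico_eq_sum_range]
    have h3 : (i : ℕ) + 1 - (j : ℕ) = n + 1 := by omega
    rw [h3]
    rw [add_comm s t, add_pow, Finset.sum_mul]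
    refine Finset.sum_congr rfl ?_
    intro l hl
    rw [Finset.mem_range] at hl
    have hl' : l ≤ n := by omega
    have c1 : (j : ℕ) + l ≤ (i : ℕ) := by omega
    have c2 : (i : ℕ) - ((j : ℕ) + l) = n - l := by omega
    have c3 : (j : ℕ) + l - (j : ℕ) = l := by omega
    rw [hG]; simp only []
    rw [if_pos c1, if_pos (Nat.le_add_right _ _), c2, c3]
    have hfact : ((n.choose l : ℂ)) * (l.factorial : ℂ) * ((n - l).factorial : ℂ)
        = (n.factorial : ℂ) := by
      exact_mod_cast congrArg (Nat.cast : ℕ → ℂ) (Nat.choose_mul_factorial_mul_factorial hl')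
    have f1 : ((l.factorial : ℂ)) ≠ 0 := Nat.cast_ne_zero.mpr (Nat.factorial_ne_zero l)
    have f2 : (((n - l).factorial : ℂ)) ≠ 0 := Nat.cast_ne_zero.mpr (Nat.factorial_ne_zero _)
    have f3 : ((n.factorial : ℂ)) ≠ 0 := Nat.cast_ne_zero.mpr (Nat.factorial_ne_zero n)
    field_simp
    linear_combination (-(s ^ (n - l) * t ^ l)) * hfact
  · rw [if_neg hij, Finset.sum_eq_zero]
    intro k _
    by_cases h1 : (k : ℕ) ≤ (i : ℕ)
    · rw [if_neg (by omega : ¬ (j : ℕ) ≤ (k : ℕ)), mul_zero]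
    · rw [if_neg h1, zero_mul]

lemma Emat_zero (m : ℕ) : Emat m 0 = 1 := by
  ext i j
  simp only [Emat, Matrix.of_apply, Matrix.one_apply]
  by_cases h : i = j
  · subst h
    simp
  · rw [if_neg h]
    by_cases h2 : (j : ℕ) ≤ (i : ℕ)
    · have : (i : ℕ) - (j : ℕ) ≠ 0 := by
        have : (i : ℕ) ≠ (j : ℕ) := fun hc => h (Fin.ext hc)
        omega
      rw [if_pos h2, zero_pow this, zero_mul]
    · rw [if_neg h2]

/-! ### The polynomial transform -/

/-- The linear map sending `v` to `∑ i, v i • X^(2m-1-i)/(2m-1-i)!`. -/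
noncomputable def Phi (m : ℕ) : (Fin (2 * m) → ℂ) →ₗ[ℂ] Polynomial ℂ where
  toFun u := ∑ i : Fin (2 * m),
    Polynomial.C (u i * (((2 * m - 1 - (i : ℕ)).factorial : ℂ))⁻¹) *
      Polynomial.X ^ (2 * m - 1 - (i : ℕ))
  map_add' u v := by
    rw [← Finset.sum_add_distrib]
    refine Finset.sum_congr rfl fun i _ => ?_
    simp only [Pi.add_apply, Polynomial.C_mul, Polynomial.C_add, add_mul]
  map_smul' c u := by
    simp only [RingHom.id_apply, Finset.smul_sum, Pi.smul_apply, smul_eq_mul,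
      Polynomial.smul_eq_C_mul, Polynomial.C_mul]
    refine Finset.sum_congr rfl fun x _ => ?_
    ring

lemma coeff_Phi (m : ℕ) (u : Fin (2 * m) → ℂ) (i₀ : Fin (2 * m)) :
    (Phi m u).coeff (2 * m - 1 - (i₀ : ℕ)) = u i₀ * (((2 * m - 1 - (i₀ : ℕ)).factorial : ℂ))⁻¹ := by
  show (∑ i : Fin (2 * m), Polynomial.C (u i * (((2 * m - 1 - (i : ℕ)).factorial : ℂ))⁻¹) *
      Polynomial.X ^ (2 * m - 1 - (i : ℕ))).coeff (2 * m - 1 - (i₀ : ℕ)) = _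
  rw [Polynomial.finset_sum_coeff, Finset.sum_eq_single i₀]
  · rw [Polynomial.coeff_C_mul, Polynomial.coeff_X_pow, if_pos rfl, mul_one]
  · intro i _ hi
    rw [Polynomial.coeff_C_mul, Polynomial.coeff_X_pow, if_neg, mul_zero]
    intro hc
    exact hi (Fin.ext (by have h1 := i.isLt; have h2 := i₀.isLt; omega))
  · intro h; exact absurd (Finset.mem_univ _) h

lemma Phi_eq_zero (m : ℕ) (u : Fin (2 * m) → ℂ) (h : Phi m u = 0) : u = 0 := by
  funext i₀
  have := coeff_Phi m u i₀
  rw [h, Polynomial.coeff_zero] at this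
  have hf : (((2 * m - 1 - (i₀ : ℕ)).factorial : ℂ))⁻¹ ≠ 0 :=
    inv_ne_zero (Nat.cast_ne_zero.mpr (Nat.factorial_ne_zero _))
  have := this.symm
  rcases mul_eq_zero.mp this with h1 | h1
  · exact h1
  · exact absurd h1 hf

lemma Phi_ker (m : ℕ) : LinearMap.ker (Phi m) = ⊥ :=
  LinearMap.ker_eq_bot'.mpr (Phi_eq_zero m)

/-- The key bridge: coordinates of `Emat m t * u` are evaluations of iterated derivatives of
`Phi m u`. -/
lemma mulVec_Emat (m : ℕ) (t : ℂ) (u : Fin (2 * m) → ℂ) (r : Fin (2 * m)) :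
    (Emat m t).mulVec u r
      = ((⇑Polynomial.derivative)^[2 * m - 1 - (r : ℕ)] (Phi m u)).eval t := by
  have hsum : ∀ (k : ℕ) (f : Fin (2 * m) → Polynomial ℂ),
      (⇑Polynomial.derivative)^[k] (∑ i, f i) = ∑ i, (⇑Polynomial.derivative)^[k] (f i) := by
    intro k
    induction k with
    | zero => intro f; simp
    | succ k ih =>
      intro f
      rw [Function.iterate_succ_apply, Polynomial.derivative_sum]
      exact ih _
  set k := 2 * m - 1 - (r : ℕ) with hk
  have hLHS : (Emat m t).mulVec u r = ∑ j : Fin (2 * m), Emat m t r j * u j := by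
    simp [Matrix.mulVec, dotProduct]
  rw [hLHS]
  have hPhi : Phi m u = ∑ i : Fin (2 * m),
      Polynomial.C (u i * (((2 * m - 1 - (i : ℕ)).factorial : ℂ))⁻¹) *
        Polynomial.X ^ (2 * m - 1 - (i : ℕ)) := rfl
  rw [hPhi, hsum, Polynomial.eval_finset_sum]
  refine Finset.sum_congr rfl fun i _ => ?_
  rw [Polynomial.iterate_derivative_C_mul, Polynomial.iterate_derivative_X_pow_eq_C_mul,
    Polynomial.eval_mul, Polynomial.eval_mul, Polynomial.eval_C, Polynomial.eval_C,
    Polynomial.eval_pow, Polynomial.eval_X]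
  simp only [Emat, Matrix.of_apply]
  have hi := i.isLt
  have hr := r.isLt
  by_cases hir : (i : ℕ) ≤ (r : ℕ)
  · rw [if_pos hir]
    have e1 : 2 * m - 1 - (i : ℕ) - k = (r : ℕ) - (i : ℕ) := by omega
    have e2 : k ≤ 2 * m - 1 - (i : ℕ) := by omega
    have hfid : (((r : ℕ) - (i : ℕ)).factorial) * ((2 * m - 1 - (i : ℕ)).descFactorial k)
        = (2 * m - 1 - (i : ℕ)).factorial := by
      have := Nat.factorial_mul_descFactorial e2
      rwa [(by omega : 2 * m - 1 - (i : ℕ) - k = (r : ℕ) - (i : ℕ))] at this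
    have hfid' : ((((r : ℕ) - (i : ℕ)).factorial : ℂ))
        * (((2 * m - 1 - (i : ℕ)).descFactorial k : ℂ))
        = (((2 * m - 1 - (i : ℕ)).factorial : ℂ)) := by exact_mod_cast congrArg Nat.cast hfid
    rw [e1]
    have f1 : ((((r : ℕ) - (i : ℕ)).factorial : ℂ)) ≠ 0 :=
      Nat.cast_ne_zero.mpr (Nat.factorial_ne_zero _)
    have f2 : (((2 * m - 1 - (i : ℕ)).factorial : ℂ)) ≠ 0 :=
      Nat.cast_ne_zero.mpr (Nat.factorial_ne_zero _)
    field_simp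
    linear_combination (-(t ^ ((r : ℕ) - (i : ℕ)) * u i)) * hfid'
  · rw [if_neg hir]
    have : (2 * m - 1 - (i : ℕ)).descFactorial k = 0 := by
      rw [Nat.descFactorial_eq_zero_iff_lt]
      omega
    rw [this]
    simp

/-! ### Nonvanishing of the Wronskian -/

lemma coeff_prod_of_natDegree_le' {ι : Type*} (s : Finset ι) (f : ι → Polynomial ℂ) (e : ι → ℕ)
    (h : ∀ i ∈ s, (f i).natDegree ≤ e i) :
    (∏ i ∈ s, f i).coeff (∑ i ∈ s, e i) = ∏ i ∈ s, (f i).coeff (e i) := by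
  induction s using Finset.cons_induction with
  | empty => simp
  | cons a s ha ih =>
    rw [Finset.prod_cons, Finset.sum_cons,
      Polynomial.coeff_mul_add_eq_of_natDegree_le (h a (Finset.mem_cons_self a s))
        ((Polynomial.natDegree_prod_le _ _).trans
          (Finset.sum_le_sum fun i hi => h i (Finset.mem_cons_of_mem hi))),
      ih fun i hi => h i (Finset.mem_cons_of_mem hi), Finset.prod_cons]

lemma wr_ne_zero {n : ℕ} (q : Fin n → Polynomial ℂ) (h0 : ∀ j, q j ≠ 0)
    (hd : Function.Injective fun j => (q j).natDegree) :
    (Matrix.of fun i j : Fin n => (⇑Polynomial.derivative)^[(i : ℕ)] (q j)).det ≠ 0 := by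
  classical
  set d : Fin n → ℕ := fun j => (q j).natDegree with hd_def
  set N : ℕ := (∑ j, d j) - (∑ j : Fin n, (j : ℕ)) with hN
  have key : ∀ σ : Equiv.Perm (Fin n),
      (∏ j, (⇑Polynomial.derivative)^[((σ j : Fin n) : ℕ)] (q j)).coeff N
        = ∏ j, (((d j).descFactorial ((σ j : Fin n) : ℕ) : ℂ) * (q j).leadingCoeff) := by
    intro σ
    by_cases hσ : ∀ j, ((σ j : Fin n) : ℕ) ≤ d j
    · have hNs : ∑ j, (d j - ((σ j : Fin n) : ℕ)) = N := by
        rw [Finset.sum_tsub_distrib _ (fun j _ => hσ j), hN]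
        congr 1
        exact Equiv.sum_comp σ (fun j : Fin n => (j : ℕ))
      rw [← hNs, coeff_prod_of_natDegree_le' _ _ _
        (fun j _ => Polynomial.natDegree_iterate_derivative (q j) _)]
      refine Finset.prod_congr rfl fun j _ => ?_
      rw [Polynomial.coeff_iterate_derivative, Nat.sub_add_cancel (hσ j),
        Polynomial.coeff_natDegree]
      rw [nsmul_eq_mul]
    · push_neg at hσ
      obtain ⟨j₀, hj₀⟩ := hσ
      rw [Finset.prod_eq_zero (Finset.mem_univ j₀)
        (Polynomial.iterate_derivative_eq_zero hj₀), Polynomial.coeff_zero]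
      symm
      refine Finset.prod_eq_zero (Finset.mem_univ j₀) ?_
      rw [Nat.descFactorial_eq_zero_iff_lt.mpr hj₀]
      simp
  have hcoeff : ((Matrix.of fun i j : Fin n =>
      (⇑Polynomial.derivative)^[(i : ℕ)] (q j)).det).coeff N
      = (Matrix.of fun i j : Fin n => (((d j).descFactorial (i : ℕ) : ℂ))).det
        * ∏ j, (q j).leadingCoeff := by
    rw [Matrix.det_apply, Polynomial.finset_sum_coeff]
    rw [Matrix.det_apply, Finset.sum_mul]
    refine Finset.sum_congr rfl fun σ _ => ?_
    rw [Polynomial.coeff_smul]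
    have : (∏ j, (Matrix.of fun i j : Fin n =>
        (⇑Polynomial.derivative)^[(i : ℕ)] (q j)) (σ j) j).coeff N
        = ∏ j, (((d j).descFactorial ((σ j : Fin n) : ℕ) : ℂ) * (q j).leadingCoeff) := key σ
    rw [this, Finset.prod_mul_distrib, smul_mul_assoc]
    rfl
  have hvdm : (Matrix.of fun i j : Fin n => (((d j).descFactorial (i : ℕ) : ℂ))).det ≠ 0 := by
    rw [← Matrix.det_transpose]
    have heq : (Matrix.of fun i j : Fin n => (((d j).descFactorial (i : ℕ) : ℂ))).transpose
        = Matrix.of fun i j : Fin n => (descPochhammer ℂ (j : ℕ)).eval ((d i : ℂ)) := by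
      ext i j
      rw [Matrix.transpose_apply, Matrix.of_apply, Matrix.of_apply,
        descPochhammer_eval_eq_descFactorial]
    rw [heq, ← Matrix.det_eval_matrixOfPolynomials_eq_det_vandermonde
      (fun i : Fin n => ((d i : ℂ))) (fun i : Fin n => descPochhammer ℂ (i : ℕ))
      (fun i => descPochhammer_natDegree ℂ (i : ℕ))
      (fun i => monic_descPochhammer ℂ (i : ℕ))]
    rw [Matrix.det_vandermonde_ne_zero_iff]
    exact fun a b hab => hd (Nat.cast_injective hab)
  have hlc : (∏ j, (q j).leadingCoeff) ≠ 0 :=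
    Finset.prod_ne_zero_iff.mpr fun j _ => Polynomial.leadingCoeff_ne_zero.mpr (h0 j)
  intro hcontra
  rw [hcontra, Polynomial.coeff_zero] at hcoeff
  exact (mul_ne_zero hvdm hlc) hcoeff.symm

/-! ### Echelon bases -/

lemma echelon {n : ℕ} (S : ℕ) :
    ∀ p : Fin n → Polynomial ℂ, (∑ j, (p j).natDegree) = S → LinearIndependent ℂ p →
      ∃ q : Fin n → Polynomial ℂ, LinearIndependent ℂ q ∧
        Submodule.span ℂ (Set.range q) = Submodule.span ℂ (Set.range p) ∧
        Function.Injective fun j => (q j).natDegree := by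
  classical
  induction S using Nat.strong_induction_on with
  | _ S ih =>
    intro p hS hp
    by_cases hinj : Function.Injective fun j => (p j).natDegree
    · exact ⟨p, hp, rfl, hinj⟩
    · rw [Function.not_injective_iff] at hinj
      obtain ⟨j, i, hdeg, hij⟩ := hinj
      -- replace p j by p j - c • p i  with c = lc (p j) / lc (p i)
      set c : ℂ := (p j).leadingCoeff / (p i).leadingCoeff with hc
      set q : Fin n → Polynomial ℂ := Function.update p j (p j - c • p i) with hq
      have hqi : ∀ k, k ≠ j → q k = p k := fun k hk => Function.update_of_ne hk _ _
      have hqj : q j = p j - c • p i := Function.update_self _ _ _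
      -- linear independence of q
      have hq_ind : LinearIndependent ℂ q := by
        rw [Fintype.linearIndependent_iff] at hp ⊢
        intro g hg
        set g' : Fin n → ℂ := Function.update g i (g i - g j * c) with hg'
        have hgg' : ∀ k, k ≠ i → g' k = g k := fun k hk => Function.update_of_ne hk _ _
        have hgi : g' i = g i - g j * c := Function.update_self _ _ _
        have hA : (∑ k, g k • q k) - ∑ k, g k • p k = -((g j * c) • p i) := by
          rw [← Finset.sum_sub_distrib, Finset.sum_eq_single j]
          · rw [hqj, smul_sub, smul_smul, sub_sub_cancel_left]
          · intro k _ hk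
            rw [hqi k hk, sub_self]
          · intro h; exact absurd (Finset.mem_univ _) h
        have hB : (∑ k, g' k • p k) - ∑ k, g k • p k = -((g j * c) • p i) := by
          rw [← Finset.sum_sub_distrib, Finset.sum_eq_single i]
          · rw [hgi, sub_smul, sub_sub_cancel_left]
          · intro k _ hk
            rw [hgg' k hk, sub_self]
          · intro h; exact absurd (Finset.mem_univ _) h
        have hsum : ∑ k, g' k • p k = 0 := by
          have h1 : ∑ k, g' k • p k = ∑ k, g k • q k := by
            linear_combination (norm := ring_nf) hB - hA
          rw [h1, hg]
        have hg'0 : ∀ k, g' k = 0 := hp g' hsum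
        intro k
        by_cases hk : k = i
        · have h2 := hg'0 j
          rw [hgg' j hij] at h2
          have h1 := hg'0 i
          rw [hgi, h2, zero_mul, sub_zero] at h1
          rw [hk]
          exact h1
        · have := hg'0 k
          rwa [hgg' k hk] at this
      -- q j is nonzero, and its degree has dropped
      have hpj : p j ≠ 0 := hp.ne_zero j
      have hpi : p i ≠ 0 := hp.ne_zero i
      have hlcj : (p j).leadingCoeff ≠ 0 := Polynomial.leadingCoeff_ne_zero.mpr hpj
      have hlci : (p i).leadingCoeff ≠ 0 := Polynomial.leadingCoeff_ne_zero.mpr hpi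
      have hc0 : c ≠ 0 := div_ne_zero hlcj hlci
      have hq_ne : q j ≠ 0 := hq_ind.ne_zero j
      have hlt : (q j).degree < (p j).degree := by
        rw [hqj]
        refine Polynomial.degree_sub_lt ?_ hpj ?_
        · rw [Polynomial.smul_eq_C_mul, Polynomial.degree_mul, Polynomial.degree_C hc0, zero_add,
            Polynomial.degree_eq_natDegree hpi, Polynomial.degree_eq_natDegree hpj]
          exact_mod_cast hdeg
        · rw [Polynomial.smul_eq_C_mul, Polynomial.leadingCoeff_mul, Polynomial.leadingCoeff_C,
            hc, div_mul_cancel₀ _ hlci]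
      have hnat : (q j).natDegree < (p j).natDegree :=
        Polynomial.natDegree_lt_natDegree hq_ne hlt
      have hsum_lt : (∑ k, (q k).natDegree) < S := by
        rw [← hS]
        have h1 : ∑ k, (q k).natDegree
            = (q j).natDegree + ∑ k ∈ Finset.univ.erase j, (p k).natDegree := by
          rw [← Finset.add_sum_erase _ _ (Finset.mem_univ j)]
          congr 1
          refine Finset.sum_congr rfl fun k hk => ?_
          rw [hqi k (Finset.ne_of_mem_erase hk)]
        have h2 : ∑ k, (p k).natDegree
            = (p j).natDegree + ∑ k ∈ Finset.univ.erase j, (p k).natDegree :=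
          (Finset.add_sum_erase _ _ (Finset.mem_univ j)).symm
        omega
      obtain ⟨q', hq'_ind, hq'_span, hq'_inj⟩ := ih _ hsum_lt q rfl hq_ind
      refine ⟨q', hq'_ind, ?_, hq'_inj⟩
      rw [hq'_span]
      have hij' : i ≠ j := fun h => hij h.symm
      apply le_antisymm
      · rw [Submodule.span_le]
        rintro x ⟨k, rfl⟩
        by_cases hk : k = j
        · rw [hk, hqj]
          exact Submodule.sub_mem _ (Submodule.subset_span ⟨j, rfl⟩)
            (Submodule.smul_mem _ _ (Submodule.subset_span ⟨i, rfl⟩))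
        · rw [hqi k hk]
          exact Submodule.subset_span ⟨k, rfl⟩
      · rw [Submodule.span_le]
        rintro x ⟨k, rfl⟩
        by_cases hk : k = j
        · have hpj_eq : p j = q j + c • q i := by
            rw [hqj, hqi i hij', sub_add_cancel]
          rw [hk, hpj_eq]
          exact Submodule.add_mem _ (Submodule.subset_span ⟨j, rfl⟩)
            (Submodule.smul_mem _ _ (Submodule.subset_span ⟨i, rfl⟩))
        · rw [← hqi k hk]
          exact Submodule.subset_span ⟨k, rfl⟩

lemma iterate_derivative_finset_sum {ι : Type*} (s : Finset ι) (k : ℕ)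
    (f : ι → Polynomial ℂ) :
    (⇑Polynomial.derivative)^[k] (∑ i ∈ s, f i) = ∑ i ∈ s, (⇑Polynomial.derivative)^[k] (f i) := by
  induction k generalizing f with
  | zero => simp
  | succ k ih =>
    rw [Function.iterate_succ_apply, Polynomial.derivative_sum]
    exact ih _

end OscAux

open OscAux

/-- **Lemma.**  For every `m`-dimensional subspace `H` of `ℂ^{2m}`, there are only finitely
many `t ∈ ℂ` for which `H` meets the osculating subspace `F_m(t)` nontrivially. -/
theorem finitely_many_osculating_incidences (m : ℕ) (hm : 1 ≤ m)
    (H : Submodule ℂ (Fin (2 * m) → ℂ)) (hH : Module.finrank ℂ H = m) :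
    {t : ℂ | H ⊓ osc m m t ≠ ⊥}.Finite := by
  classical
  -- pick a basis of H and transform it into an echelon family of polynomials
  let b : Module.Basis (Fin m) ℂ H := Module.finBasisOfFinrankEq ℂ H hH
  let B : Fin m → (Fin (2 * m) → ℂ) := fun j => (b j : Fin (2 * m) → ℂ)
  have hB : LinearIndependent ℂ B :=
    b.linearIndependent.map' H.subtype (Submodule.ker_subtype H)
  have hBspan : Submodule.span ℂ (Set.range B) = H := by
    have h1 : Set.range B = H.subtype '' Set.range b := by
      rw [← Set.range_comp]; rfl
    rw [h1, ← Submodule.map_span, b.span_eq, Submodule.map_top, Submodule.range_subtype]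
  set P : Fin m → Polynomial ℂ := fun j => Phi m (B j) with hP_def
  have hP : LinearIndependent ℂ P := hB.map' (Phi m) (Phi_ker m)
  obtain ⟨q, hq_ind, hq_span, hq_inj⟩ := echelon _ P rfl hP
  set W : Polynomial ℂ :=
    (Matrix.of fun i j : Fin m => (⇑Polynomial.derivative)^[(i : ℕ)] (q j)).det with hW_def
  have hW : W ≠ 0 := wr_ne_zero q (fun j => hq_ind.ne_zero j) hq_inj
  have hsub : {t : ℂ | H ⊓ osc m m t ≠ ⊥} ⊆ (fun t : ℂ => -t) ⁻¹' {x | W.IsRoot x} := by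
    intro t ht
    obtain ⟨v, hv, hv0⟩ := (Submodule.ne_bot_iff _).mp ht
    have hvH : v ∈ H := hv.1
    have hvo : v ∈ osc m m t := hv.2
    obtain ⟨w, hw, hwv⟩ := hvo
    -- the coordinates of w of index ≥ m vanish
    have hwsupp : ∀ r : Fin (2 * m), m ≤ (r : ℕ) → w r = 0 := by
      intro r hr
      have hle : Submodule.span ℂ
          ((fun i : Fin (2 * m) => (Pi.single i 1 : Fin (2 * m) → ℂ)) '' {i | (i : ℕ) < m})
          ≤ LinearMap.ker (LinearMap.proj (R := ℂ) (φ := fun _ : Fin (2 * m) => ℂ) r) := by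
        rw [Submodule.span_le]
        rintro x ⟨i, hi, rfl⟩
        have : i ≠ r := by
          intro h
          rw [h] at hi
          exact absurd hi (by simpa using hr)
        simp only [SetLike.mem_coe, LinearMap.mem_ker, LinearMap.proj_apply]
        exact Pi.single_eq_of_ne (Ne.symm this) 1
      exact hle hw
    -- v = Emat m t *ᵥ w
    have hv_eq : v = (Emat m t).mulVec w := by
      rw [← hwv, exp_eta, Matrix.toLin'_apply]
    -- evaluation conditions on Phi m v
    have hder : ∀ i : Fin m,
        ((⇑Polynomial.derivative)^[(i : ℕ)] (Phi m v)).eval (-t) = 0 := by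
      intro i
      have hi := i.isLt
      have hri : 2 * m - 1 - (i : ℕ) < 2 * m := by omega
      set r : Fin (2 * m) := ⟨2 * m - 1 - (i : ℕ), hri⟩ with hr_def
      have h1 : (Emat m (-t)).mulVec v r = w r := by
        rw [hv_eq, Matrix.mulVec_mulVec, Emat_mul, neg_add_cancel, Emat_zero, Matrix.one_mulVec]
      have h2 := mulVec_Emat m (-t) v r
      have h3 : w r = 0 := hwsupp r (by simp only [hr_def]; omega)
      have h4 : 2 * m - 1 - (r : ℕ) = (i : ℕ) := by
        simp only [hr_def]; omega
      rw [h4] at h2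
      rw [← h2, h1, h3]
    -- express Phi m v in the echelon family
    have hvmem : Phi m v ∈ Submodule.span ℂ (Set.range q) := by
      rw [hq_span]
      have h1 : v ∈ Submodule.span ℂ (Set.range B) := by rw [hBspan]; exact hvH
      have h2 := Submodule.mem_map_of_mem (f := (Phi m : (Fin (2 * m) → ℂ) →ₗ[ℂ] Polynomial ℂ)) h1
      rw [Submodule.map_span, ← Set.range_comp] at h2
      exact h2
    obtain ⟨d, hd⟩ := (Submodule.mem_span_range_iff_exists_fun ℂ).mp hvmem
    have hPhiv0 : Phi m v ≠ 0 := fun h => hv0 (Phi_eq_zero m v h)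
    have hd0 : d ≠ 0 := by
      rintro rfl
      simp only [Pi.zero_apply, zero_smul, Finset.sum_const_zero] at hd
      exact hPhiv0 hd.symm
    have hmv : (Matrix.of fun i j : Fin m =>
        ((⇑Polynomial.derivative)^[(i : ℕ)] (q j)).eval (-t)).mulVec d = 0 := by
      funext i
      have h5 : (⇑Polynomial.derivative)^[(i : ℕ)] (Phi m v)
          = ∑ j, d j • (⇑Polynomial.derivative)^[(i : ℕ)] (q j) := by
        rw [← hd, iterate_derivative_finset_sum]
        refine Finset.sum_congr rfl fun j _ => ?_
        rw [Polynomial.iterate_derivative_smul]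
      have h6 := hder i
      rw [h5, Polynomial.eval_finset_sum] at h6
      simp only [Matrix.mulVec, dotProduct, Matrix.of_apply, Pi.zero_apply]
      rw [← h6]
      refine Finset.sum_congr rfl fun j _ => ?_
      rw [Polynomial.eval_smul, smul_eq_mul, mul_comm]
    have hdet0 : (Matrix.of fun i j : Fin m =>
        ((⇑Polynomial.derivative)^[(i : ℕ)] (q j)).eval (-t)).det = 0 :=
      Matrix.exists_mulVec_eq_zero_iff.mp ⟨d, hd0, hmv⟩
    show W.IsRoot (-t)
    have h7 : W.eval (-t) = (Matrix.of fun i j : Fin m =>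
        ((⇑Polynomial.derivative)^[(i : ℕ)] (q j)).eval (-t)).det := by
      have h8 := RingHom.map_det (Polynomial.evalRingHom (-t))
        (Matrix.of fun i j : Fin m => (⇑Polynomial.derivative)^[(i : ℕ)] (q j))
      rw [hW_def]
      rw [show (Polynomial.evalRingHom (-t)) ((Matrix.of fun i j : Fin m =>
          (⇑Polynomial.derivative)^[(i : ℕ)] (q j)).det) = ((Matrix.of fun i j : Fin m =>
          (⇑Polynomial.derivative)^[(i : ℕ)] (q j)).det).eval (-t) from rfl] at h8
      rw [h8]
      congr 1
    exact h7.trans hdet0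
  have hfin : {x : ℂ | W.IsRoot x}.Finite := Polynomial.finite_setOf_isRoot hW
  exact Set.Finite.subset (hfin.preimage (neg_injective.injOn)) hsub
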